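/- Weighted Sobolev regularity implies weighted Hölder regularity of the Fourier transform: Let n ≥ 1, m ∈ ℕ with m ≥ 1, 0 < ε, and let V : ℝ² → M_n(ℂ) be of class C^m with (1+|x|²)^{ε/2} ∂^k V ∈ L¹(ℝ², M_n(ℂ)) for every multi-index k with |k| ≤ m. Set α = min(1, ε). Then ‖V̂‖_{α,m} < ∞, i.e. sup_{p ∈ ℝ²} (1+|p|²)^{m/2}|V̂(p)| < ∞ and sup_{p,ξ ∈ ℝ², 0<|ξ|≤1} |ξ|^{−α} |(1+|p+ξ|²)^{m/2} V̂(p+ξ) − (1+|p|²)^{m/2} V̂(p)| < ∞. -/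

import Mathlib

open Real Complex MeasureTheory

/-- Partial derivative `∂_j` of a function on `ℝ²` (realized as `Fin 2 → ℝ`). -/
noncomputable def pd (j : Fin 2) (f : (Fin 2 → ℝ) → ℂ) : (Fin 2 → ℝ) → ℂ :=
  fun x => fderiv ℝ f x (Pi.single j 1)

/-- Iterated partial derivative `∂^k = ∂₁^{k₁} ∂₂^{k₂}` for a multi-index `k = (k₁, k₂)`. -/
noncomputable def pdk (k : ℕ × ℕ) (f : (Fin 2 → ℝ) → ℂ) : (Fin 2 → ℝ) → ℂ :=
  (pd 0)^[k.1] ((pd 1)^[k.2] f)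

/-- The Fourier transform `V̂(p) = (1/(2π)²) ∫ e^{i p·x} V(x) dx`, taken entrywise. -/
noncomputable def ftMat {n : ℕ} (V : (Fin 2 → ℝ) → Matrix (Fin n) (Fin n) ℂ)
    (p : Fin 2 → ℝ) : Matrix (Fin n) (Fin n) ℂ :=
  fun i j => (1 / (2 * (π : ℂ)) ^ 2) *
    ∫ x : Fin 2 → ℝ, Complex.exp (Complex.I * ((p 0 * x 0 : ℝ) + (p 1 * x 1 : ℝ))) * V x i j

/-- The entrywise-max norm `|A| = max_{i,j} |A_{ij}|` on `Mₙ(ℂ)`. -/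
noncomputable def entryMax {n : ℕ} (A : Matrix (Fin n) (Fin n) ℂ) : ℝ :=
  ⨆ i : Fin n, ⨆ j : Fin n, ‖A i j‖

/-- The weight `(1 + |p|²)^{s/2}` on `ℝ²`. -/
noncomputable def wt (s : ℝ) (p : Fin 2 → ℝ) : ℝ :=
  (1 + (p 0) ^ 2 + (p 1) ^ 2) ^ (s / 2)

/-!
Write `⟨p⟩ = (1 + |p|²)^{1/2}`. Since `⟨p⟩^m ≤ 3^m (1 + |p₁|^m + |p₂|^m)` and, by integration by
parts, `p_a^m f̂(p)` is up to a unimodular factor the Fourier transform of `∂_a^m f`, the decay of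
`V̂` is bounded by the weighted `L¹` norms of `V` and of its pure derivatives of order `m`.

For the Hölder bound, `f̂(p + ξ) - f̂(p)` is the transform of `(e^{iξ·x} - 1) f`, and
`|e^{iξ·x} - 1| ≤ 2 min(1, |ξ| ⟨x⟩) ≤ 2 |ξ|^α ⟨x⟩^ε` for `α = min(1, ε)`. Multiplying by the
weight costs the increments of `⟨p⟩^m` and of `p_a^m`, which are `O(m 2^m |ξ| ⟨p + ξ⟩^m)` by the
mean value bound for `t ↦ t^m`, because `⟨·⟩` is `1`-Lipschitz; against `f̂(p + ξ)` these are
controlled by the decay estimate, and `|ξ| ≤ |ξ|^α` for `|ξ| ≤ 1`.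
-/

noncomputable def japaneseBracket (p : Fin 2 → ℝ) : ℝ := √(1 + p 0 ^ 2 + p 1 ^ 2)

noncomputable def euclNorm (ξ : Fin 2 → ℝ) : ℝ := √(ξ 0 ^ 2 + ξ 1 ^ 2)

section Weights

lemma one_le_japaneseBracket (p : Fin 2 → ℝ) : 1 ≤ japaneseBracket p :=
  Real.one_le_sqrt.mpr (by nlinarith [sq_nonneg (p 0), sq_nonneg (p 1)])

lemma wt_eq_rpow (s : ℝ) (p : Fin 2 → ℝ) : wt s p = japaneseBracket p ^ s := by
  rw [wt, japaneseBracket, Real.sqrt_eq_rpow, ← Real.rpow_mul (by positivity)]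
  ring_nf

lemma wt_natCast (m : ℕ) (p : Fin 2 → ℝ) : wt m p = japaneseBracket p ^ m := by
  rw [wt_eq_rpow, Real.rpow_natCast]

lemma wt_pos (s : ℝ) (p : Fin 2 → ℝ) : 0 < wt s p := by
  rw [wt_eq_rpow]
  exact Real.rpow_pos_of_pos (zero_lt_one.trans_le (one_le_japaneseBracket p)) s

lemma one_le_wt {s : ℝ} (hs : 0 ≤ s) (p : Fin 2 → ℝ) : 1 ≤ wt s p := by
  rw [wt_eq_rpow]
  exact Real.one_le_rpow (one_le_japaneseBracket p) hs

lemma euclNorm_nonneg (ξ : Fin 2 → ℝ) : 0 ≤ euclNorm ξ := Real.sqrt_nonneg _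

lemma abs_apply_le_euclNorm (ξ : Fin 2 → ℝ) (a : Fin 2) : |ξ a| ≤ euclNorm ξ := by
  rw [euclNorm, ← Real.sqrt_sq_eq_abs]
  apply Real.sqrt_le_sqrt
  fin_cases a <;> simp <;> positivity

lemma abs_apply_le_japaneseBracket (p : Fin 2 → ℝ) (a : Fin 2) : |p a| ≤ japaneseBracket p :=
  (abs_apply_le_euclNorm p a).trans (Real.sqrt_le_sqrt (by linarith))

lemma abs_dot_le (ξ x : Fin 2 → ℝ) :
    |ξ 0 * x 0 + ξ 1 * x 1| ≤ euclNorm ξ * japaneseBracket x := by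
  rw [euclNorm, japaneseBracket, ← Real.sqrt_mul (by positivity), ← Real.sqrt_sq_eq_abs]
  apply Real.sqrt_le_sqrt
  nlinarith [sq_nonneg (ξ 0 * x 1 - ξ 1 * x 0), sq_nonneg (ξ 0), sq_nonneg (ξ 1)]

lemma abs_japaneseBracket_add_sub_le (p ξ : Fin 2 → ℝ) :
    |japaneseBracket (p + ξ) - japaneseBracket p| ≤ euclNorm ξ := by
  set q := p + ξ
  have hq : ξ = q - p := by simp [q]
  have hA := Real.sq_sqrt (show 0 ≤ 1 + q 0 ^ 2 + q 1 ^ 2 by positivity)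
  have hB := Real.sq_sqrt (show 0 ≤ 1 + p 0 ^ 2 + p 1 ^ 2 by positivity)
  -- Cauchy–Schwarz for `(1, q)` and `(1, p)`
  have hcs : 1 + q 0 * p 0 + q 1 * p 1 ≤ japaneseBracket q * japaneseBracket p := by
    rw [japaneseBracket, japaneseBracket, ← Real.sqrt_mul (by positivity)]
    apply Real.le_sqrt_of_sq_le
    nlinarith [sq_nonneg (q 0 - p 0), sq_nonneg (q 1 - p 1), sq_nonneg (q 0 * p 1 - q 1 * p 0)]
  rw [← Real.sqrt_sq_eq_abs, euclNorm, hq]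
  apply Real.sqrt_le_sqrt
  simp only [Pi.sub_apply, japaneseBracket] at hA hB hcs ⊢
  nlinarith

lemma japaneseBracket_le_two_mul {ξ : Fin 2 → ℝ} (hξ : euclNorm ξ ≤ 1) (p : Fin 2 → ℝ) :
    japaneseBracket p ≤ 2 * japaneseBracket (p + ξ) := by
  have := abs_japaneseBracket_add_sub_le p ξ
  have := one_le_japaneseBracket (p + ξ)
  linarith [neg_abs_le (japaneseBracket (p + ξ) - japaneseBracket p)]

lemma abs_pow_sub_pow_le_of_abs_le_two_mul {x y t : ℝ} (ht : 1 ≤ t) (hx : |x| ≤ 2 * t)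
    (hy : |y| ≤ 2 * t) (m : ℕ) : |x ^ m - y ^ m| ≤ m * 2 ^ m * t ^ m * |x - y| := by
  have hpow : (2 * t) ^ (m - 1) ≤ 2 ^ m * t ^ m := by
    rw [← mul_pow]
    exact pow_le_pow_right₀ (by linarith) (Nat.sub_le m 1)
  calc |x ^ m - y ^ m| ≤ |x - y| * m * max |x| |y| ^ (m - 1) := abs_pow_sub_pow_le x y m
    _ ≤ |x - y| * m * (2 * t) ^ (m - 1) := by gcongr; exact max_le hx hy
    _ ≤ |x - y| * m * (2 ^ m * t ^ m) := by gcongr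
    _ = m * 2 ^ m * t ^ m * |x - y| := by ring

lemma abs_wt_add_sub_le {ξ : Fin 2 → ℝ} (hξ : euclNorm ξ ≤ 1) (m : ℕ) (p : Fin 2 → ℝ) :
    |wt m (p + ξ) - wt m p| ≤ m * 2 ^ m * euclNorm ξ * wt m (p + ξ) := by
  have hq := one_le_japaneseBracket (p + ξ)
  rw [wt_natCast, wt_natCast]
  refine (abs_pow_sub_pow_le_of_abs_le_two_mul hq ?_ ?_ m).trans ?_
  · rw [abs_of_nonneg (by linarith)]; linarith
  · rw [abs_of_nonneg (by linarith [one_le_japaneseBracket p])]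
    exact japaneseBracket_le_two_mul hξ p
  · have := abs_japaneseBracket_add_sub_le p ξ
    have : 0 ≤ (m : ℝ) * 2 ^ m * japaneseBracket (p + ξ) ^ m := by positivity
    nlinarith

lemma abs_pow_apply_add_sub_le {ξ : Fin 2 → ℝ} (hξ : euclNorm ξ ≤ 1) (m : ℕ) (p : Fin 2 → ℝ)
    (a : Fin 2) : |(p + ξ) a ^ m - p a ^ m| ≤ m * 2 ^ m * euclNorm ξ * wt m (p + ξ) := by
  have hq := one_le_japaneseBracket (p + ξ)
  rw [wt_natCast]
  refine (abs_pow_sub_pow_le_of_abs_le_two_mul hq ?_ ?_ m).trans ?_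
  · linarith [abs_apply_le_japaneseBracket (p + ξ) a]
  · exact (abs_apply_le_japaneseBracket p a).trans (japaneseBracket_le_two_mul hξ p)
  · have : |(p + ξ) a - p a| ≤ euclNorm ξ := by simpa using abs_apply_le_euclNorm ξ a
    have : 0 ≤ (m : ℝ) * 2 ^ m * japaneseBracket (p + ξ) ^ m := by positivity
    nlinarith

lemma wt_le_three_pow_mul (m : ℕ) (p : Fin 2 → ℝ) :
    wt m p ≤ 3 ^ m * (1 + |p 0| ^ m + |p 1| ^ m) := by
  set M := max 1 (max |p 0| |p 1|) with hMdef
  have h0 : |p 0| ≤ M := (le_max_left _ _).trans (le_max_right _ _)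
  have h1 : |p 1| ≤ M := (le_max_right _ _).trans (le_max_right _ _)
  have hM : 1 ≤ M := le_max_left _ _
  have hbr : japaneseBracket p ≤ 3 * M := by
    rw [japaneseBracket, Real.sqrt_le_left (by positivity)]
    nlinarith [sq_abs (p 0), sq_abs (p 1), abs_nonneg (p 0), abs_nonneg (p 1)]
  have hMpow : M ^ m ≤ 1 + |p 0| ^ m + |p 1| ^ m := by
    have : 0 ≤ |p 0| ^ m := by positivity
    have : 0 ≤ |p 1| ^ m := by positivity
    rcases max_choice 1 (max |p 0| |p 1|) with h | h <;> rw [hMdef, h]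
    · simp only [one_pow]; linarith
    · rcases max_choice |p 0| |p 1| with h' | h' <;> rw [h'] <;> linarith
  calc wt m p = japaneseBracket p ^ m := wt_natCast m p
    _ ≤ (3 * M) ^ m := by gcongr; linarith [one_le_japaneseBracket p]
    _ ≤ 3 ^ m * (1 + |p 0| ^ m + |p 1| ^ m) := by rw [mul_pow]; gcongr

end Weights

section Fourier

noncomputable def fourierKer (p x : Fin 2 → ℝ) : ℂ :=
  Complex.exp (I * ((p 0 * x 0 + p 1 * x 1 : ℝ) : ℂ))

noncomputable def fourierInt (g : (Fin 2 → ℝ) → ℂ) (p : Fin 2 → ℝ) : ℂ :=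
  ∫ x, fourierKer p x * g x

lemma ftMat_apply {n : ℕ} (V : (Fin 2 → ℝ) → Matrix (Fin n) (Fin n) ℂ) (p : Fin 2 → ℝ)
    (i j : Fin n) :
    ftMat V p i j = (1 / (2 * (π : ℂ)) ^ 2) * fourierInt (fun x => V x i j) p := by
  simp only [ftMat, fourierInt, fourierKer, ofReal_add]

lemma norm_fourierKer (p x : Fin 2 → ℝ) : ‖fourierKer p x‖ = 1 :=
  norm_exp_I_mul_ofReal _

lemma continuous_fourierKer (p : Fin 2 → ℝ) : Continuous (fourierKer p) := by
  unfold fourierKer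
  fun_prop

lemma fourierKer_add (p ξ x : Fin 2 → ℝ) :
    fourierKer (p + ξ) x = fourierKer p x * fourierKer ξ x := by
  simp only [fourierKer, ← Complex.exp_add, Pi.add_apply]
  push_cast
  ring_nf

lemma hasLineDerivAt_fourierKer (p x v : Fin 2 → ℝ) :
    HasLineDerivAt ℝ (fourierKer p) (I * (p 0 * v 0 + p 1 * v 1 : ℝ) * fourierKer p x) x v := by
  have hu : HasDerivAt (fun t : ℝ => p 0 * (x + t • v) 0 + p 1 * (x + t • v) 1)
      (p 0 * v 0 + p 1 * v 1) 0 := by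
    have h : (fun t : ℝ => p 0 * (x + t • v) 0 + p 1 * (x + t • v) 1)
        = fun t => (p 0 * x 0 + p 1 * x 1) + t * (p 0 * v 0 + p 1 * v 1) := by
      funext t; simp only [Pi.add_apply, Pi.smul_apply, smul_eq_mul]; ring
    rw [h]
    exact (hasDerivAt_mul_const _).const_add _
  refine (hu.ofReal_comp.const_mul I).cexp.congr_deriv ?_
  simp only [fourierKer, zero_smul, add_zero]
  ring

lemma MeasureTheory.Integrable.fourierKer_mul {g : (Fin 2 → ℝ) → ℂ} (hg : Integrable g)
    (p : Fin 2 → ℝ) :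
    Integrable (fun x => fourierKer p x * g x) :=
  hg.bdd_mul (continuous_fourierKer p).aestronglyMeasurable
    (.of_forall fun x => (norm_fourierKer p x).le)

lemma norm_fourierInt_le (g : (Fin 2 → ℝ) → ℂ) (p : Fin 2 → ℝ) :
    ‖fourierInt g p‖ ≤ ∫ x, ‖g x‖ :=
  (norm_integral_le_integral_norm _).trans_eq (by simp only [norm_mul, norm_fourierKer, one_mul])

lemma fourierInt_pd {g : (Fin 2 → ℝ) → ℂ} (hd : Differentiable ℝ g) (hg : Integrable g)
    (a : Fin 2) (hg' : Integrable (pd a g)) (p : Fin 2 → ℝ) :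
    fourierInt (pd a g) p = -(I * p a) * fourierInt g p := by
  have hker : ∀ x, HasLineDerivAt ℝ (fourierKer p) (I * p a * fourierKer p x) x
      (Pi.single a 1) := fun x => by
    convert hasLineDerivAt_fourierKer p x (Pi.single a 1) using 4
    fin_cases a <;> simp
  have hibp := integral_bilinear_hasLineDerivAt_right_eq_neg_left_of_integrable
    (B := ContinuousLinearMap.mul ℝ ℂ) (g' := pd a g)
    (by simpa only [ContinuousLinearMap.mul_apply', mul_assoc]
      using (hg.fourierKer_mul p).const_mul (I * p a))
    (by simpa only [ContinuousLinearMap.mul_apply'] using hg'.fourierKer_mul p)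
    (by simpa only [ContinuousLinearMap.mul_apply'] using hg.fourierKer_mul p)
    (fun x _ => hker x) (fun x _ => (hd x).hasFDerivAt.hasLineDerivAt _)
  simp only [ContinuousLinearMap.mul_apply'] at hibp
  rw [fourierInt, hibp, fourierInt, ← integral_const_mul, ← integral_neg]
  congr 1 with x
  ring

lemma fourierInt_iterate_pd {g : (Fin 2 → ℝ) → ℂ} {a : Fin 2} {l : ℕ}
    (hd : ∀ j < l, Differentiable ℝ ((pd a)^[j] g))
    (hi : ∀ j ≤ l, Integrable ((pd a)^[j] g)) (p : Fin 2 → ℝ) :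
    fourierInt ((pd a)^[l] g) p = (-(I * p a)) ^ l * fourierInt g p := by
  induction l with
  | zero => simp
  | succ l ih =>
    have hl := hi (l + 1) le_rfl
    rw [Function.iterate_succ_apply'] at hl ⊢
    rw [fourierInt_pd (hd l l.lt_succ_self) (hi l l.le_succ) a hl,
      ih (fun j hj => hd j (by omega)) (fun j hj => hi j (by omega)), pow_succ]
    ring

lemma min_one_le_rpow {t α : ℝ} (ht : 0 ≤ t) (hα0 : 0 ≤ α) (hα1 : α ≤ 1) : min 1 t ≤ t ^ α := by
  rcases le_total t 1 with h | h
  · exact (min_le_right _ _).trans (Real.self_le_rpow_of_le_one ht h hα1)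
  · exact (min_le_left _ _).trans (Real.one_le_rpow h hα0)

lemma norm_fourierKer_sub_one_le {α ε : ℝ} (hα0 : 0 ≤ α) (hα1 : α ≤ 1) (hαε : α ≤ ε)
    (ξ x : Fin 2 → ℝ) : ‖fourierKer ξ x - 1‖ ≤ 2 * euclNorm ξ ^ α * wt ε x := by
  have hs := euclNorm_nonneg ξ
  have hx := one_le_japaneseBracket x
  have h2 : ‖fourierKer ξ x - 1‖ ≤ 2 := by
    simpa [norm_fourierKer, one_add_one_eq_two] using norm_sub_le (fourierKer ξ x) 1
  have hθ : ‖fourierKer ξ x - 1‖ ≤ euclNorm ξ * japaneseBracket x :=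
    norm_exp_I_mul_ofReal_sub_one_le.trans (abs_dot_le ξ x)
  have hsx : 0 ≤ euclNorm ξ * japaneseBracket x := by positivity
  calc ‖fourierKer ξ x - 1‖ ≤ 2 * min 1 (euclNorm ξ * japaneseBracket x) := by
        rw [mul_min_of_nonneg _ _ zero_le_two]; exact le_min (by linarith) (by linarith)
    _ ≤ 2 * (euclNorm ξ * japaneseBracket x) ^ α := by gcongr; exact min_one_le_rpow hsx hα0 hα1
    _ = 2 * euclNorm ξ ^ α * japaneseBracket x ^ α := by
        rw [Real.mul_rpow hs (by positivity)]; ring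
    _ ≤ 2 * euclNorm ξ ^ α * wt ε x := by
        rw [wt_eq_rpow]
        gcongr

lemma fourierInt_add_sub {g : (Fin 2 → ℝ) → ℂ} (hg : Integrable g) (p ξ : Fin 2 → ℝ) :
    fourierInt g (p + ξ) - fourierInt g p = fourierInt (fun x => (fourierKer ξ x - 1) * g x) p := by
  simp only [fourierInt, fourierKer_add, mul_assoc]
  rw [← integral_sub ((hg.fourierKer_mul ξ).fourierKer_mul p) (hg.fourierKer_mul p)]
  congr 1 with x
  ring

end Fourier

section WeightedL1

noncomputable def weightedL1Norm (ε : ℝ) (g : (Fin 2 → ℝ) → ℂ) : ℝ := ∫ x, wt ε x * ‖g x‖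

lemma weightedL1Norm_nonneg (ε : ℝ) (g : (Fin 2 → ℝ) → ℂ) : 0 ≤ weightedL1Norm ε g :=
  integral_nonneg fun x => mul_nonneg (wt_pos ε x).le (norm_nonneg _)

lemma continuous_wt (ε : ℝ) : Continuous (wt ε) := by
  unfold wt
  exact (by fun_prop : Continuous _).rpow_const fun x => Or.inl (by positivity)

variable {ε : ℝ} {g : (Fin 2 → ℝ) → ℂ}

lemma integrable_of_integrable_wt_mul (hε : 0 ≤ ε)
    (h : Integrable (fun x => (wt ε x : ℂ) * g x)) : Integrable g := by
  have hw : ∀ x, (wt ε x : ℂ) ≠ 0 := fun x => ofReal_ne_zero.mpr (wt_pos ε x).ne'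
  have hcont : Continuous fun x => ((wt ε x)⁻¹ : ℂ) :=
    (continuous_ofReal.comp (continuous_wt ε)).inv₀ hw
  refine (h.bdd_mul hcont.aestronglyMeasurable (c := 1) (.of_forall fun x => ?_)).congr
    (.of_forall fun x => by simp [hw x])
  rw [norm_inv, norm_real, Real.norm_of_nonneg (wt_pos ε x).le]
  exact inv_le_one_of_one_le₀ (one_le_wt hε x)

lemma integrable_wt_mul_norm (h : Integrable (fun x => (wt ε x : ℂ) * g x)) :
    Integrable (fun x => wt ε x * ‖g x‖) :=
  h.norm.congr (.of_forall fun x => by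
    simp only [norm_mul, norm_real, Real.norm_of_nonneg (wt_pos ε x).le])

lemma norm_fourierInt_le_weightedL1Norm (hε : 0 ≤ ε) (hg : Integrable g)
    (hw : Integrable (fun x => wt ε x * ‖g x‖)) (p : Fin 2 → ℝ) :
    ‖fourierInt g p‖ ≤ weightedL1Norm ε g :=
  (norm_fourierInt_le g p).trans
    (integral_mono hg.norm hw fun x => le_mul_of_one_le_left (norm_nonneg _) (one_le_wt hε x))

lemma norm_fourierInt_add_sub_le {α : ℝ} (hα0 : 0 ≤ α) (hα1 : α ≤ 1) (hαε : α ≤ ε)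
    (hg : Integrable g) (hw : Integrable (fun x => wt ε x * ‖g x‖)) (p ξ : Fin 2 → ℝ) :
    ‖fourierInt g (p + ξ) - fourierInt g p‖ ≤ 2 * euclNorm ξ ^ α * weightedL1Norm ε g := by
  rw [fourierInt_add_sub hg, weightedL1Norm, ← integral_const_mul]
  refine (norm_fourierInt_le _ p).trans (integral_mono_of_nonneg (.of_forall fun x => by positivity)
    (hw.const_mul _) (.of_forall fun x => ?_))
  simp only [norm_mul, ← mul_assoc]
  gcongr
  exact norm_fourierKer_sub_one_le hα0 hα1 hαε ξ x

end WeightedL1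

section PartialDerivatives

lemma contDiff_pd {f : (Fin 2 → ℝ) → ℂ} {r : ℕ} (h : ContDiff ℝ (r + 1 : ℕ) f) (a : Fin 2) :
    ContDiff ℝ r (pd a f) :=
  (ContinuousLinearMap.apply ℝ ℂ (Pi.single a 1)).contDiff.comp
    (h.fderiv_right (by norm_cast))

lemma contDiff_iterate_pd {f : (Fin 2 → ℝ) → ℂ} {l r : ℕ} (h : ContDiff ℝ (l + r : ℕ) f)
    (a : Fin 2) : ContDiff ℝ r ((pd a)^[l] f) := by
  induction l generalizing f with
  | zero => simpa using h
  | succ l ih =>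
    rw [Function.iterate_succ_apply]
    exact ih (contDiff_pd (by rwa [Nat.add_right_comm] at h) a)

lemma differentiable_iterate_pd {f : (Fin 2 → ℝ) → ℂ} {l m : ℕ} (h : ContDiff ℝ m f)
    (hl : l < m) (a : Fin 2) : Differentiable ℝ ((pd a)^[l] f) :=
  (contDiff_iterate_pd (r := 1) (h.of_le (by exact_mod_cast hl)) a).differentiable one_ne_zero

end PartialDerivatives

structure AxisSobolev (ε : ℝ) (m : ℕ) (f : (Fin 2 → ℝ) → ℂ) : Prop where
  contDiff : ContDiff ℝ m f
  integrable : ∀ a : Fin 2, ∀ l ≤ m, Integrable ((pd a)^[l] f)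
  integrable_wt : ∀ a : Fin 2, ∀ l ≤ m, Integrable (fun x => wt ε x * ‖(pd a)^[l] f x‖)

noncomputable def axisBound (ε : ℝ) (m : ℕ) (f : (Fin 2 → ℝ) → ℂ) : ℝ :=
  weightedL1Norm ε f + weightedL1Norm ε ((pd 0)^[m] f) + weightedL1Norm ε ((pd 1)^[m] f)

lemma axisBound_nonneg (ε : ℝ) (m : ℕ) (f : (Fin 2 → ℝ) → ℂ) : 0 ≤ axisBound ε m f := by
  unfold axisBound
  have := weightedL1Norm_nonneg ε f
  have := weightedL1Norm_nonneg ε ((pd 0)^[m] f)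
  have := weightedL1Norm_nonneg ε ((pd 1)^[m] f)
  positivity

noncomputable def holderConst (m : ℕ) : ℝ := 3 ^ m * (m * 2 ^ m * (1 + 2 * 3 ^ m) + 2)

lemma holderConst_nonneg (m : ℕ) : 0 ≤ holderConst m := by
  unfold holderConst
  positivity

namespace AxisSobolev

variable {ε α : ℝ} {m : ℕ} {f : (Fin 2 → ℝ) → ℂ}

lemma of_integrable_wt_mul_pdk (hε : 0 ≤ ε) (hf : ContDiff ℝ m f)
    (h : ∀ k : ℕ × ℕ, k.1 + k.2 ≤ m → Integrable (fun x => (wt ε x : ℂ) * pdk k f x)) :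
    AxisSobolev ε m f := by
  have hpure : ∀ a : Fin 2, ∀ l ≤ m, Integrable (fun x => (wt ε x : ℂ) * (pd a)^[l] f x) := by
    intro a l hl
    fin_cases a
    · exact h (l, 0) (by simpa using hl)
    · exact h (0, l) (by simpa using hl)
  exact ⟨hf, fun a l hl => integrable_of_integrable_wt_mul hε (hpure a l hl),
    fun a l hl => integrable_wt_mul_norm (hpure a l hl)⟩

lemma fourierInt_iterate_pd (hf : AxisSobolev ε m f) (a : Fin 2) (p : Fin 2 → ℝ) :
    fourierInt ((pd a)^[m] f) p = (-(I * p a)) ^ m * fourierInt f p :=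
  _root_.fourierInt_iterate_pd (fun _ hj => differentiable_iterate_pd hf.contDiff hj a)
    (hf.integrable a) p

lemma norm_fourierInt_le (hε : 0 ≤ ε) (hf : AxisSobolev ε m f) (p : Fin 2 → ℝ) :
    ‖fourierInt f p‖ ≤ weightedL1Norm ε f :=
  norm_fourierInt_le_weightedL1Norm hε (hf.integrable 0 0 (Nat.zero_le m))
    (hf.integrable_wt 0 0 (Nat.zero_le m)) p

lemma abs_pow_mul_norm_fourierInt_le (hε : 0 ≤ ε) (hf : AxisSobolev ε m f) (a : Fin 2)
    (p : Fin 2 → ℝ) : |p a| ^ m * ‖fourierInt f p‖ ≤ weightedL1Norm ε ((pd a)^[m] f) := by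
  have h := norm_fourierInt_le_weightedL1Norm hε (hf.integrable a m le_rfl)
    (hf.integrable_wt a m le_rfl) p
  rwa [hf.fourierInt_iterate_pd, norm_mul, norm_pow, norm_neg, norm_mul, norm_I, one_mul,
    norm_real, Real.norm_eq_abs] at h

lemma wt_mul_norm_fourierInt_le (hε : 0 ≤ ε) (hf : AxisSobolev ε m f) (p : Fin 2 → ℝ) :
    wt m p * ‖fourierInt f p‖ ≤ 3 ^ m * axisBound ε m f := by
  have h0 := hf.norm_fourierInt_le hε p
  have h1 := hf.abs_pow_mul_norm_fourierInt_le hε 0 p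
  have h2 := hf.abs_pow_mul_norm_fourierInt_le hε 1 p
  calc wt m p * ‖fourierInt f p‖
      ≤ 3 ^ m * (1 + |p 0| ^ m + |p 1| ^ m) * ‖fourierInt f p‖ := by
        gcongr; exact wt_le_three_pow_mul m p
    _ ≤ 3 ^ m * axisBound ε m f := by
        rw [axisBound, mul_assoc]; gcongr; linarith

lemma abs_pow_mul_norm_fourierInt_add_sub_le (hα0 : 0 ≤ α) (hα1 : α ≤ 1) (hαε : α ≤ ε)
    (hf : AxisSobolev ε m f) {ξ : Fin 2 → ℝ} (hξ : euclNorm ξ ≤ 1) (a : Fin 2) (p : Fin 2 → ℝ) :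
    |p a| ^ m * ‖fourierInt f (p + ξ) - fourierInt f p‖
      ≤ m * 2 ^ m * euclNorm ξ * (wt m (p + ξ) * ‖fourierInt f (p + ξ)‖)
        + 2 * euclNorm ξ ^ α * weightedL1Norm ε ((pd a)^[m] f) := by
  set G := fourierInt ((pd a)^[m] f)
  set q := p + ξ
  have hG : ∀ r, G r = (-I) ^ m * ((r a ^ m : ℝ) : ℂ) * fourierInt f r := fun r => by
    simp only [G, hf.fourierInt_iterate_pd, neg_mul_eq_neg_mul, mul_pow, ofReal_pow]
  have hsplit : (-I) ^ m * ((p a ^ m : ℝ) * (fourierInt f q - fourierInt f p))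
      = (-I) ^ m * (((p a ^ m - q a ^ m : ℝ) : ℂ) * fourierInt f q) + (G q - G p) := by
    rw [hG, hG]; push_cast; ring
  have hnorm : ∀ z : ℂ, ‖(-I) ^ m * z‖ = ‖z‖ := fun z => by
    rw [norm_mul, norm_pow, norm_neg, norm_I, one_pow, one_mul]
  calc |p a| ^ m * ‖fourierInt f q - fourierInt f p‖
      = ‖(-I) ^ m * ((p a ^ m : ℝ) * (fourierInt f q - fourierInt f p))‖ := by
        rw [hnorm, norm_mul, norm_real, Real.norm_eq_abs, abs_pow]
    _ ≤ |q a ^ m - p a ^ m| * ‖fourierInt f q‖ + ‖G q - G p‖ := by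
        rw [hsplit, ← abs_neg, neg_sub]
        refine (norm_add_le _ _).trans_eq ?_
        rw [hnorm, norm_mul, norm_real, Real.norm_eq_abs]
    _ ≤ m * 2 ^ m * euclNorm ξ * wt m q * ‖fourierInt f q‖
          + 2 * euclNorm ξ ^ α * weightedL1Norm ε ((pd a)^[m] f) :=
        add_le_add (mul_le_mul_of_nonneg_right (abs_pow_apply_add_sub_le hξ m p a) (norm_nonneg _))
          (norm_fourierInt_add_sub_le hα0 hα1 hαε (hf.integrable a m le_rfl)
            (hf.integrable_wt a m le_rfl) p ξ)
    _ = _ := by ring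

lemma wt_mul_norm_fourierInt_add_sub_le (hα0 : 0 ≤ α) (hα1 : α ≤ 1) (hαε : α ≤ ε)
    (hf : AxisSobolev ε m f) {ξ : Fin 2 → ℝ} (hξ : euclNorm ξ ≤ 1) (p : Fin 2 → ℝ) :
    wt m p * ‖fourierInt f (p + ξ) - fourierInt f p‖
      ≤ 3 ^ m * (2 * euclNorm ξ ^ α * axisBound ε m f
        + 2 * (m * 2 ^ m * euclNorm ξ * (wt m (p + ξ) * ‖fourierInt f (p + ξ)‖))) := by
  have h0 := norm_fourierInt_add_sub_le (g := f) hα0 hα1 hαε (hf.integrable 0 0 (Nat.zero_le m))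
    (hf.integrable_wt 0 0 (Nat.zero_le m)) p ξ
  have h1 := hf.abs_pow_mul_norm_fourierInt_add_sub_le hα0 hα1 hαε hξ 0 p
  have h2 := hf.abs_pow_mul_norm_fourierInt_add_sub_le hα0 hα1 hαε hξ 1 p
  calc wt m p * ‖fourierInt f (p + ξ) - fourierInt f p‖
      ≤ 3 ^ m * (1 + |p 0| ^ m + |p 1| ^ m) * ‖fourierInt f (p + ξ) - fourierInt f p‖ := by
        gcongr; exact wt_le_three_pow_mul m p
    _ ≤ _ := by
        rw [axisBound, mul_assoc]; gcongr; linarith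

lemma norm_wt_mul_fourierInt_add_sub_le (hα0 : 0 ≤ α) (hα1 : α ≤ 1) (hαε : α ≤ ε)
    (hf : AxisSobolev ε m f) {ξ : Fin 2 → ℝ} (hξ : euclNorm ξ ≤ 1) (p : Fin 2 → ℝ) :
    ‖(wt m (p + ξ) : ℂ) * fourierInt f (p + ξ) - (wt m p : ℂ) * fourierInt f p‖
      ≤ euclNorm ξ ^ α * (holderConst m * axisBound ε m f) := by
  have hs : euclNorm ξ ≤ euclNorm ξ ^ α := Real.self_le_rpow_of_le_one (euclNorm_nonneg ξ) hξ hα1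
  have hM := axisBound_nonneg ε m f
  have hFq := hf.wt_mul_norm_fourierInt_le (hα0.trans hαε) (p + ξ)
  have hΔ := hf.wt_mul_norm_fourierInt_add_sub_le hα0 hα1 hαε hξ p
  have hsplit : (wt m (p + ξ) : ℂ) * fourierInt f (p + ξ) - (wt m p : ℂ) * fourierInt f p
      = ((wt m (p + ξ) - wt m p : ℝ) : ℂ) * fourierInt f (p + ξ)
        + (wt m p : ℂ) * (fourierInt f (p + ξ) - fourierInt f p) := by
    push_cast; ring
  have hc : (0 : ℝ) ≤ m * 2 ^ m * euclNorm ξ := by have := euclNorm_nonneg ξ; positivity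
  calc ‖(wt m (p + ξ) : ℂ) * fourierInt f (p + ξ) - (wt m p : ℂ) * fourierInt f p‖
      ≤ |wt m (p + ξ) - wt m p| * ‖fourierInt f (p + ξ)‖
        + wt m p * ‖fourierInt f (p + ξ) - fourierInt f p‖ := by
        rw [hsplit]
        refine (norm_add_le _ _).trans_eq ?_
        rw [norm_mul, norm_mul, norm_real, norm_real, Real.norm_eq_abs,
          Real.norm_of_nonneg (wt_pos _ p).le]
    _ ≤ m * 2 ^ m * euclNorm ξ * (3 ^ m * axisBound ε m f) + 3 ^ m * (2 * euclNorm ξ ^ α *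
          axisBound ε m f + 2 * (m * 2 ^ m * euclNorm ξ * (3 ^ m * axisBound ε m f))) := by
        refine add_le_add ?_ (hΔ.trans ?_)
        · calc _ ≤ m * 2 ^ m * euclNorm ξ * wt m (p + ξ) * ‖fourierInt f (p + ξ)‖ := by
                gcongr; exact abs_wt_add_sub_le hξ m p
            _ ≤ _ := by rw [mul_assoc]; gcongr
        · gcongr
    _ ≤ m * 2 ^ m * euclNorm ξ ^ α * (3 ^ m * axisBound ε m f) + 3 ^ m * (2 * euclNorm ξ ^ α *
          axisBound ε m f + 2 * (m * 2 ^ m * euclNorm ξ ^ α * (3 ^ m * axisBound ε m f))) := by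
        gcongr
    _ = euclNorm ξ ^ α * (holderConst m * axisBound ε m f) := by rw [holderConst]; ring

end AxisSobolev

noncomputable def matrixAxisBound {n : ℕ} (ε : ℝ) (m : ℕ)
    (V : (Fin 2 → ℝ) → Matrix (Fin n) (Fin n) ℂ) : ℝ :=
  ∑ ij : Fin n × Fin n, axisBound ε m (fun x => V x ij.1 ij.2)

section Matrix

variable {n : ℕ} {ε α : ℝ} {m : ℕ} {V : (Fin 2 → ℝ) → Matrix (Fin n) (Fin n) ℂ}

lemma matrixAxisBound_nonneg : 0 ≤ matrixAxisBound ε m V :=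
  Finset.sum_nonneg fun _ _ => axisBound_nonneg ε m _

lemma axisBound_le_matrixAxisBound (i j : Fin n) :
    axisBound ε m (fun x => V x i j) ≤ matrixAxisBound ε m V :=
  Finset.single_le_sum (f := fun ij : Fin n × Fin n => axisBound ε m (fun x => V x ij.1 ij.2))
    (fun _ _ => axisBound_nonneg ε m _) (Finset.mem_univ (i, j))

lemma mul_entryMax_le {A : Matrix (Fin n) (Fin n) ℂ} {r C : ℝ} (hr : 0 ≤ r) (hC : 0 ≤ C)
    (h : ∀ i j, r * ‖A i j‖ ≤ C) : r * entryMax A ≤ C := by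
  rw [entryMax, Real.mul_iSup_of_nonneg hr]
  refine Real.iSup_le (fun i => ?_) hC
  rw [Real.mul_iSup_of_nonneg hr]
  exact Real.iSup_le (h i) hC

lemma norm_inv_two_pi_sq_mul_le (z : ℂ) : ‖(1 / (2 * (π : ℂ)) ^ 2) * z‖ ≤ ‖z‖ := by
  rw [norm_mul]
  refine mul_le_of_le_one_left (norm_nonneg z) ?_
  rw [norm_div, norm_one, norm_pow, norm_mul, Complex.norm_two, norm_real,
    Real.norm_of_nonneg pi_pos.le, div_le_one (by positivity)]
  nlinarith [pi_gt_three]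

lemma wt_mul_entryMax_ftMat_le (hε : 0 ≤ ε) (hV : ∀ i j, AxisSobolev ε m (fun x => V x i j))
    (p : Fin 2 → ℝ) : wt m p * entryMax (ftMat V p) ≤ 3 ^ m * matrixAxisBound ε m V := by
  refine mul_entryMax_le (wt_pos _ p).le (mul_nonneg (by positivity) matrixAxisBound_nonneg)
    fun i j => ?_
  calc wt m p * ‖ftMat V p i j‖ ≤ wt m p * ‖fourierInt (fun x => V x i j) p‖ := by
        rw [ftMat_apply]
        exact mul_le_mul_of_nonneg_left (norm_inv_two_pi_sq_mul_le _) (wt_pos _ p).le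
    _ ≤ 3 ^ m * axisBound ε m (fun x => V x i j) := (hV i j).wt_mul_norm_fourierInt_le hε p
    _ ≤ 3 ^ m * matrixAxisBound ε m V := by gcongr; exact axisBound_le_matrixAxisBound i j

lemma rpow_neg_mul_entryMax_wt_mul_ftMat_add_sub_le (hα0 : 0 ≤ α) (hα1 : α ≤ 1) (hαε : α ≤ ε)
    (hV : ∀ i j, AxisSobolev ε m (fun x => V x i j)) {ξ : Fin 2 → ℝ}
    (hξ0 : 0 < euclNorm ξ) (hξ1 : euclNorm ξ ≤ 1) (p : Fin 2 → ℝ) :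
    euclNorm ξ ^ (-α) * entryMax (fun i j => (wt m (p + ξ) : ℂ) * ftMat V (p + ξ) i j
        - (wt m p : ℂ) * ftMat V p i j) ≤ holderConst m * matrixAxisBound ε m V := by
  refine mul_entryMax_le (Real.rpow_nonneg hξ0.le _)
    (mul_nonneg (holderConst_nonneg m) matrixAxisBound_nonneg) fun i j => ?_
  rw [← le_div_iff₀' (Real.rpow_pos_of_pos hξ0 _), Real.rpow_neg hξ0.le, div_inv_eq_mul]
  calc _ = ‖(1 / (2 * (π : ℂ)) ^ 2) * ((wt m (p + ξ) : ℂ) * fourierInt (fun x => V x i j) (p + ξ)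
        - (wt m p : ℂ) * fourierInt (fun x => V x i j) p)‖ := by
        rw [ftMat_apply, ftMat_apply, mul_sub, mul_left_comm, mul_left_comm _ (wt m p : ℂ)]
    _ ≤ euclNorm ξ ^ α * (holderConst m * axisBound ε m (fun x => V x i j)) :=
        (norm_inv_two_pi_sq_mul_le _).trans
          ((hV i j).norm_wt_mul_fourierInt_add_sub_le hα0 hα1 hαε hξ1 p)
    _ ≤ _ := by
        rw [mul_comm]
        exact mul_le_mul_of_nonneg_right (mul_le_mul_of_nonneg_left
          (axisBound_le_matrixAxisBound i j) (holderConst_nonneg m)) (Real.rpow_nonneg hξ0.le _)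

end Matrix

theorem stmt_3_general (n : ℕ) (m : ℕ) (ε : ℝ) (hε : 0 < ε)
    (V : (Fin 2 → ℝ) → Matrix (Fin n) (Fin n) ℂ)
    (hsmooth : ∀ i j : Fin n, ContDiff ℝ m (fun x => V x i j))
    (hint : ∀ k : ℕ × ℕ, k.1 + k.2 ≤ m → ∀ i j : Fin n,
      Integrable (fun x : Fin 2 → ℝ =>
        ((wt ε x : ℝ) : ℂ) * pdk k (fun y => V y i j) x)) :
    ∃ C : ℝ,
      (∀ p : Fin 2 → ℝ, wt m p * entryMax (ftMat V p) ≤ C) ∧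
      (∀ p ξ : Fin 2 → ℝ,
        0 < Real.sqrt ((ξ 0) ^ 2 + (ξ 1) ^ 2) →
        Real.sqrt ((ξ 0) ^ 2 + (ξ 1) ^ 2) ≤ 1 →
        (Real.sqrt ((ξ 0) ^ 2 + (ξ 1) ^ 2)) ^ (-(min 1 ε)) *
          entryMax (fun i j =>
            ((wt m (p + ξ) : ℝ) : ℂ) * ftMat V (p + ξ) i j -
              ((wt m p : ℝ) : ℂ) * ftMat V p i j) ≤ C) := by
  have hV : ∀ i j, AxisSobolev ε m (fun x => V x i j) := fun i j =>
    .of_integrable_wt_mul_pdk hε.le (hsmooth i j) fun k hk => hint k hk i j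
  have hB : 0 ≤ matrixAxisBound ε m V := matrixAxisBound_nonneg
  refine ⟨(3 ^ m + holderConst m) * matrixAxisBound ε m V, fun p => ?_, fun p ξ hξ0 hξ1 => ?_⟩
  · exact (wt_mul_entryMax_ftMat_le hε.le hV p).trans
      (mul_le_mul_of_nonneg_right (le_add_of_nonneg_right (holderConst_nonneg m)) hB)
  · exact (rpow_neg_mul_entryMax_wt_mul_ftMat_add_sub_le (le_min zero_le_one hε.le)
      (min_le_left _ _) (min_le_right _ _) hV hξ0 hξ1 p).trans
      (mul_le_mul_of_nonneg_right (le_add_of_nonneg_left (by positivity)) hB)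

/-- Weighted Sobolev regularity implies weighted Hölder regularity of the Fourier
transform: under the hypotheses, `‖V̂‖_{α,m} < ∞` with `α = min 1 ε`, i.e. both the
weighted sup and the weighted Hölder difference quotient of `V̂` are bounded. -/
theorem stmt_3 (n : ℕ) (hn : 1 ≤ n) (m : ℕ) (hm : 1 ≤ m) (ε : ℝ) (hε : 0 < ε)
    (V : (Fin 2 → ℝ) → Matrix (Fin n) (Fin n) ℂ)
    (hsmooth : ∀ i j : Fin n, ContDiff ℝ m (fun x => V x i j))
    (hint : ∀ k : ℕ × ℕ, k.1 + k.2 ≤ m → ∀ i j : Fin n,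
      Integrable (fun x : Fin 2 → ℝ =>
        ((wt ε x : ℝ) : ℂ) * pdk k (fun y => V y i j) x)) :
    ∃ C : ℝ,
      (∀ p : Fin 2 → ℝ, wt m p * entryMax (ftMat V p) ≤ C) ∧
      (∀ p ξ : Fin 2 → ℝ,
        0 < Real.sqrt ((ξ 0) ^ 2 + (ξ 1) ^ 2) →
        Real.sqrt ((ξ 0) ^ 2 + (ξ 1) ^ 2) ≤ 1 →
        (Real.sqrt ((ξ 0) ^ 2 + (ξ 1) ^ 2)) ^ (-(min 1 ε)) *
          entryMax (fun i j =>
            ((wt m (p + ξ) : ℝ) : ℂ) * ftMat V (p + ξ) i j -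
              ((wt m p : ℝ) : ℂ) * ftMat V p i j) ≤ C) :=
  stmt_3_general n m ε hε V hsmooth hint
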